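/- Define for p ∈ ℝ, η ∈ [0,1], and |φ| ≤ π/2 the quantity K_p = ∫_{−π}^{π} I₀(√(1 + η cos θ))·e^{p·cos(θ − φ)} dθ/(2π). Then K_p − K_{−p} ≥ 0 for all p ≥ 0; i.e., K_p ≥ K_{−p} whenever cos φ ≥ 0 and p ≥ 0. -/

import Mathlib

open Real

/-- Modified Bessel function of the first kind of order 0. -/
noncomputable def besselI0 (x : ℝ) : ℝ :=
  ∑' n : ℕ, (x / 2) ^ (2 * n) / ((Nat.factorial n : ℝ)) ^ 2

lemma besselI0_summable (x : ℝ) :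
    Summable (fun n : ℕ => (x / 2) ^ (2 * n) / ((Nat.factorial n : ℝ)) ^ 2) := by
  refine Summable.of_nonneg_of_le ?_ ?_ (Real.summable_pow_div_factorial (x ^ 2 / 4))
  · intro n
    rw [pow_mul]
    positivity
  · intro n
    have h1 : (x / 2) ^ (2 * n) = (x ^ 2 / 4) ^ n := by
      rw [pow_mul]; ring_nf
    rw [h1]
    have hfac : (1 : ℝ) ≤ (Nat.factorial n : ℝ) := by
      exact_mod_cast Nat.one_le_iff_ne_zero.mpr (Nat.factorial_ne_zero n)
    have hnum : (0:ℝ) ≤ (x ^ 2 / 4) ^ n := by positivity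
    have : (Nat.factorial n : ℝ) ≤ ((Nat.factorial n : ℝ)) ^ 2 := by
      nlinarith
    apply div_le_div_of_nonneg_left hnum (by positivity) this

lemma besselI0_mono {x y : ℝ} (hx : 0 ≤ x) (hxy : x ≤ y) : besselI0 x ≤ besselI0 y := by
  apply Summable.tsum_le_tsum _ (besselI0_summable x) (besselI0_summable y)
  intro n
  have : (x / 2) ^ (2 * n) ≤ (y / 2) ^ (2 * n) := by
    apply pow_le_pow_left₀ (by linarith) (by linarith)
  apply div_le_div_of_nonneg_right this (by positivity)

lemma besselI0_comp_continuous {η : ℝ} (hη : η ∈ Set.Icc (0:ℝ) 1) :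
    Continuous (fun θ : ℝ => besselI0 (Real.sqrt (1 + η * Real.cos θ))) := by
  obtain ⟨hη0, hη1⟩ := hη
  unfold besselI0
  apply continuous_tsum
    (u := fun n : ℕ => (1 / 2 : ℝ) ^ n)
  · intro n
    fun_prop
  · exact summable_geometric_of_lt_one (by norm_num) (by norm_num)
  · intro n θ
    have h1 : Real.sqrt (1 + η * Real.cos θ) ≤ Real.sqrt 2 := by
      apply Real.sqrt_le_sqrt
      nlinarith [Real.cos_le_one θ, Real.neg_one_le_cos θ]
    have h0 : (0:ℝ) ≤ Real.sqrt (1 + η * Real.cos θ) := Real.sqrt_nonneg _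
    have hfac : (1 : ℝ) ≤ ((Nat.factorial n : ℝ)) ^ 2 := by
      have : (1:ℝ) ≤ (Nat.factorial n : ℝ) := by
        exact_mod_cast Nat.one_le_iff_ne_zero.mpr (Nat.factorial_ne_zero n)
      nlinarith
    have key : (Real.sqrt (1 + η * Real.cos θ) / 2) ^ (2 * n) ≤ (1 / 2 : ℝ) ^ n := by
      rw [pow_mul]
      have hsq : (Real.sqrt (1 + η * Real.cos θ) / 2) ^ 2 ≤ (1/2 : ℝ) := by
        have h2 : Real.sqrt 2 ^ 2 = 2 := Real.sq_sqrt (by norm_num)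
        nlinarith
      apply pow_le_pow_left₀ (by positivity) hsq
    have hnn : (0:ℝ) ≤ (Real.sqrt (1 + η * Real.cos θ) / 2) ^ (2 * n) := by positivity
    rw [Real.norm_eq_abs, abs_div, abs_of_nonneg hnn, abs_of_nonneg (by positivity : (0:ℝ) ≤ ((Nat.factorial n : ℝ))^2)]
    calc (Real.sqrt (1 + η * Real.cos θ) / 2) ^ (2 * n) / ((Nat.factorial n : ℝ)) ^ 2
        ≤ (Real.sqrt (1 + η * Real.cos θ) / 2) ^ (2 * n) / 1 := by
          apply div_le_div_of_nonneg_left hnn (by norm_num) hfac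
      _ = (Real.sqrt (1 + η * Real.cos θ) / 2) ^ (2 * n) := by ring
      _ ≤ (1 / 2 : ℝ) ^ n := key

lemma exp_diff_sum_nonneg {u v : ℝ} (h : 0 ≤ u + v) :
    0 ≤ (Real.exp u - Real.exp (-u)) + (Real.exp v - Real.exp (-v)) := by
  have h1 : Real.exp (-v) ≤ Real.exp u := Real.exp_le_exp.mpr (by linarith)
  have h2 : Real.exp (-u) ≤ Real.exp v := Real.exp_le_exp.mpr (by linarith)
  linarith

noncomputable def myF (η φ p : ℝ) (θ : ℝ) : ℝ :=
  besselI0 (Real.sqrt (1 + η * Real.cos θ)) *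
    (Real.exp (p * Real.cos (θ - φ)) - Real.exp (-p * Real.cos (θ - φ)))

lemma myF_pointwise (η φ p : ℝ) (hη : η ∈ Set.Icc (0:ℝ) 1) (hφ : |φ| ≤ π / 2)
    (hp : 0 ≤ p) (θ : ℝ) :
    0 ≤ myF η φ p θ + myF η φ p (-θ) + myF η φ p (π - θ) + myF η φ p (θ - π) := by
  obtain ⟨hη0, hη1⟩ := hη
  obtain ⟨hφ1, hφ2⟩ := abs_le.mp hφ
  have hcφ : 0 ≤ Real.cos φ := Real.cos_nonneg_of_mem_Icc ⟨by linarith, hφ2⟩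
  unfold myF
  rw [Real.cos_neg, Real.cos_pi_sub, Real.cos_sub_pi,
    show -θ - φ = -(θ + φ) by ring, Real.cos_neg,
    show π - θ - φ = π - (θ + φ) by ring, Real.cos_pi_sub,
    show θ - π - φ = (θ - φ) - π by ring, Real.cos_sub_pi]
  set A := besselI0 (Real.sqrt (1 + η * Real.cos θ)) with hA
  set B := besselI0 (Real.sqrt (1 + η * -Real.cos θ)) with hB
  set c1 := Real.cos (θ - φ) with hc1
  set c2 := Real.cos (θ + φ) with hc2
  have hsum : c1 + c2 = 2 * Real.cos θ * Real.cos φ := by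
    rw [hc1, hc2, Real.cos_sub, Real.cos_add]; ring
  have key : 0 ≤ (A - B) *
      ((Real.exp (p * c1) - Real.exp (-(p * c1))) +
       (Real.exp (p * c2) - Real.exp (-(p * c2)))) := by
    rcases le_total 0 (Real.cos θ) with h | h
    · have hAB : B ≤ A := by
        apply besselI0_mono (Real.sqrt_nonneg _)
        apply Real.sqrt_le_sqrt
        nlinarith
      have hE : 0 ≤ (Real.exp (p * c1) - Real.exp (-(p * c1))) +
          (Real.exp (p * c2) - Real.exp (-(p * c2))) := by
        apply exp_diff_sum_nonneg
        have hcc : 0 ≤ c1 + c2 := by nlinarith [mul_nonneg h hcφ]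
        nlinarith [mul_nonneg hp hcc]
      exact mul_nonneg (by linarith) hE
    · have hAB : A ≤ B := by
        apply besselI0_mono (Real.sqrt_nonneg _)
        apply Real.sqrt_le_sqrt
        nlinarith
      have hcc : c1 + c2 ≤ 0 := by nlinarith [mul_nonneg (neg_nonneg.mpr h) hcφ]
      have hE := exp_diff_sum_nonneg (u := -(p * c1)) (v := -(p * c2))
        (by nlinarith [mul_nonneg hp (neg_nonneg.mpr hcc)])
      rw [neg_neg, neg_neg] at hE
      nlinarith [mul_nonneg (sub_nonneg.mpr hAB)
        (by linarith :
          0 ≤ (Real.exp (-(p * c1)) - Real.exp (p * c1)) +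
            (Real.exp (-(p * c2)) - Real.exp (p * c2)))]
  refine key.trans (le_of_eq ?_)
  simp only [neg_mul, mul_neg, neg_neg]
  ring

/-- The two-site partition function `K_p`. -/
noncomputable def Kfun (η φ p : ℝ) : ℝ :=
  ∫ θ in (-π)..π,
    besselI0 (Real.sqrt (1 + η * Real.cos θ)) * Real.exp (p * Real.cos (θ - φ)) / (2 * π)

theorem Kfun_ge_of_nonneg
    (η φ p : ℝ) (hη : η ∈ Set.Icc (0:ℝ) 1) (hφ : |φ| ≤ π / 2) (hp : 0 ≤ p) :
    Kfun η φ (-p) ≤ Kfun η φ p := by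
  have hπ : (0:ℝ) < π := Real.pi_pos
  have contA := besselI0_comp_continuous hη
  have cexp : ∀ q : ℝ, Continuous fun θ : ℝ => Real.exp (q * Real.cos (θ - φ)) := by
    intro q; continuity
  have contF : Continuous (myF η φ p) := by
    unfold myF
    exact contA.mul ((cexp p).sub (cexp (-p)))
  have perF : Function.Periodic (myF η φ p) (2 * π) := by
    intro θ
    unfold myF
    rw [show θ + 2 * π - φ = (θ - φ) + 2 * π by ring, Real.cos_add_two_pi,
      Real.cos_add_two_pi]
  set I : ℝ := ∫ θ in (-π)..π, myF η φ p θ with hI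
  have eqneg : (∫ θ in (-π)..π, myF η φ p (-θ)) = I := by
    rw [intervalIntegral.integral_comp_neg, neg_neg]
  have eqpisub : (∫ θ in (-π)..π, myF η φ p (π - θ)) = I := by
    rw [intervalIntegral.integral_comp_sub_left]
    have h := perF.intervalIntegral_add_eq 0 (-π)
    rw [show (0:ℝ) + 2 * π = 2 * π by ring, show -π + 2 * π = π by ring] at h
    rw [show π - π = (0:ℝ) by ring, show π - -π = 2 * π by ring, h]
  have eqsubpi : (∫ θ in (-π)..π, myF η φ p (θ - π)) = I := by
    rw [intervalIntegral.integral_comp_sub_right]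
    have h := perF.intervalIntegral_add_eq (-(2*π)) (-π)
    rw [show -(2*π) + 2 * π = (0:ℝ) by ring, show -π + 2 * π = π by ring] at h
    rw [show -π - π = -(2*π) by ring, show π - π = (0:ℝ) by ring, h]
  have int1 : IntervalIntegrable (fun θ => myF η φ p θ) MeasureTheory.volume (-π) π :=
    contF.intervalIntegrable _ _
  have int2 : IntervalIntegrable (fun θ => myF η φ p (-θ)) MeasureTheory.volume (-π) π :=
    (contF.comp continuous_neg).intervalIntegrable _ _
  have int3 : IntervalIntegrable (fun θ => myF η φ p (π - θ)) MeasureTheory.volume (-π) π :=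
    (contF.comp (continuous_const.sub continuous_id)).intervalIntegrable _ _
  have int4 : IntervalIntegrable (fun θ => myF η φ p (θ - π)) MeasureTheory.volume (-π) π :=
    (contF.comp (continuous_id.sub continuous_const)).intervalIntegrable _ _
  have sum_eq : (∫ θ in (-π)..π,
      (myF η φ p θ + myF η φ p (-θ) + myF η φ p (π - θ) + myF η φ p (θ - π))) = 4 * I := by
    rw [intervalIntegral.integral_add ((int1.add int2).add int3) int4,
      intervalIntegral.integral_add (int1.add int2) int3,
      intervalIntegral.integral_add int1 int2, eqneg, eqpisub, eqsubpi]
    ring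
  have hInn : 0 ≤ I := by
    have h4 : 0 ≤ 4 * I := by
      rw [← sum_eq]
      apply intervalIntegral.integral_nonneg (by linarith)
      intro θ _
      exact myF_pointwise η φ p hη hφ hp θ
    linarith
  have intg : ∀ q : ℝ, IntervalIntegrable
      (fun θ => besselI0 (Real.sqrt (1 + η * Real.cos θ)) * Real.exp (q * Real.cos (θ - φ)) / (2 * π))
      MeasureTheory.volume (-π) π := by
    intro q
    exact ((contA.mul (cexp q)).div_const _).intervalIntegrable _ _
  have hdiff : Kfun η φ p - Kfun η φ (-p) = (1 / (2 * π)) * I := by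
    unfold Kfun
    rw [← intervalIntegral.integral_sub (intg p) (intg (-p))]
    rw [← intervalIntegral.integral_const_mul]
    apply intervalIntegral.integral_congr
    intro θ _
    unfold myF
    field_simp
  nlinarith [mul_nonneg (le_of_lt (by positivity : (0:ℝ) < 1 / (2 * π))) hInn]
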